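/- For all integers q ≥ 2 and n ≥ 1, and under each of the scenarios (∗∗) and (•∗), the family 𝓖_q ∪ 𝓛_q is n-cell implementable if and only if q ≤ 2 when n = 1, and q ≤ 2n − 1 when n ≥ 2. -/

import Mathlib

/-- The alphabet 𝔹• = {0, 1, ∗, •}. -/
inductive BB : Type
  | zero
  | one
  | star
  | reject
deriving DecidableEq

instance instFintypeBB : Fintype BB where
  elems := {BB.zero, BB.one, BB.star, BB.reject}
  complete := by intro x; cases x <;> first | decide | simp

/-- The cell function T : 𝔹• × 𝔹• → 𝔹: T(u,ϑ) = 1 iff u = ∗, or ϑ = ∗,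
or u,ϑ ∈ 𝔹 with u = ϑ. -/
def Tcell : BB → BB → Bool
  | BB.star, _ => true
  | _, BB.star => true
  | BB.zero, BB.zero => true
  | BB.one, BB.one => true
  | _, _ => false

/-- The word-level function T(u,ϑ) = ⋀_{j<n} T(u_j, ϑ_j). -/
def Tword {n : ℕ} (u θ : Fin n → BB) : Bool :=
  decide (∀ j, Tcell (u j) (θ j) = true)

/-- The alphabet 𝔹 = {0,1} ⊆ 𝔹•. -/
def Bcirc : Set BB := {BB.zero, BB.one}

/-- The alphabet 𝔹∗ = {0,1,∗} ⊆ 𝔹•. -/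
def Bstar : Set BB := {BB.zero, BB.one, BB.star}

/-- The full alphabet 𝔹•. -/
def Bdot : Set BB := Set.univ

/-- A family Φ of functions {0,…,q−1} → 𝔹 is n-cell implementable under
scenario (A,B) if there are mappings u : {0,…,q−1} → A^n and ϑ : Φ → B^n
with f(x) = T(u(x), ϑ(f)) for all f ∈ Φ and x. -/
def Implementable (A B : Set BB) (n q : ℕ) (Φ : Set (Fin q → Bool)) : Prop :=
  ∃ u : Fin q → Fin n → BB, ∃ θ : (Fin q → Bool) → Fin n → BB,
    (∀ x j, u x j ∈ A) ∧ (∀ f ∈ Φ, ∀ j, θ f j ∈ B) ∧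
    (∀ f ∈ Φ, ∀ x, f x = Tword (u x) (θ f))

/-- The family 𝓔_q = { x ↦ [x = t] : t ∈ [q⟩ }. -/
def Eset (q : ℕ) : Set (Fin q → Bool) :=
  { f | ∃ t : Fin q, f = fun x => decide (x = t) }

/-- The family 𝓝_q = { x ↦ [x ≠ t] : t ∈ [q⟩ }. -/
def Nset (q : ℕ) : Set (Fin q → Bool) :=
  { f | ∃ t : Fin q, f = fun x => decide (x ≠ t) }

/-- The family 𝓖_q = { x ↦ [x ≥ t] : t ∈ [q⟩ }. -/
def Gset (q : ℕ) : Set (Fin q → Bool) :=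
  { f | ∃ t : Fin q, f = fun x => decide (t ≤ x) }

/-- The family 𝓛_q = { x ↦ [x ≤ t] : t ∈ [q⟩ }. -/
def Lset (q : ℕ) : Set (Fin q → Bool) :=
  { f | ∃ t : Fin q, f = fun x => decide (x ≤ t) }


-- ================= preliminaries =================

lemma Tcell_star_right (a : BB) : Tcell a BB.star = true := by cases a <;> rfl

lemma Tword_true_iff {n : ℕ} (u θ : Fin n → BB) :
    Tword u θ = true ↔ ∀ j, Tcell (u j) (θ j) = true := by simp [Tword]

lemma decide_eq_Tword {P : Prop} [Decidable P] {n : ℕ} {u θ : Fin n → BB}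
    (h : P ↔ ∀ j, Tcell (u j) (θ j) = true) : decide P = Tword u θ := by
  by_cases hp : P
  · have h2 := (Tword_true_iff u θ).mpr (h.mp hp)
    simp [hp, h2]
  · have h2 : Tword u θ ≠ true := fun hc => hp (h.mpr ((Tword_true_iff u θ).mp hc))
    simp [hp, Bool.not_eq_true] at *
    simp [h2]

lemma mem_Bstar {b : BB} (h : b ≠ BB.reject) : b ∈ Bstar := by
  cases b <;> simp_all [Bstar]

lemma impl_star_to_dot {B : Set BB} {n q : ℕ} {Φ : Set (Fin q → Bool)}
    (h : Implementable Bstar B n q Φ) : Implementable Bdot B n q Φ := by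
  obtain ⟨u, θ, _, h2, h3⟩ := h
  exact ⟨u, θ, fun _ _ => Set.mem_univ _, h2, h3⟩

-- ================= restriction lemma =================

lemma impl_restrict {A B : Set BB} {n q q' : ℕ} (hq' : 2 ≤ q') (hle : q' ≤ q)
    (H : Implementable A B n q (Gset q ∪ Lset q)) :
    Implementable A B n q' (Gset q' ∪ Lset q') := by
  obtain ⟨u, θ, hu, hθ, himp⟩ := H
  have hq : 0 < q := by omega
  set emb : Fin q' → Fin q := fun x => ⟨x.1, lt_of_lt_of_le x.2 hle⟩ with hemb
  set ext : (Fin q' → Bool) → Fin q → Bool :=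
    fun f x => if hx : x.1 < q' then f ⟨x.1, hx⟩ else f ⟨q' - 1, by omega⟩ with hext
  have hmem : ∀ f ∈ Gset q' ∪ Lset q', ext f ∈ Gset q ∪ Lset q := by
    rintro f (⟨t, rfl⟩ | ⟨t, rfl⟩)
    · left
      refine ⟨⟨t.1, by omega⟩, funext fun x => ?_⟩
      simp only [hext]
      split_ifs with hx
      · exact decide_eq_decide.mpr (by simp [Fin.le_def])
      · have h1 : (t.1 : ℕ) ≤ q' - 1 := by omega
        have h2 : (t.1 : ℕ) ≤ x.1 := by omega
        simp [Fin.le_def, h1, h2]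
    · by_cases ht : t.1 = q' - 1
      · left
        refine ⟨⟨0, hq⟩, funext fun x => ?_⟩
        have h2 : (0:ℕ) ≤ x.1 := Nat.zero_le _
        simp only [hext]
        split_ifs with hx
        · simp [Fin.le_def, ht, h2]
          omega
        · simp [Fin.le_def, ht, h2]
      · right
        refine ⟨⟨t.1, by omega⟩, funext fun x => ?_⟩
        simp only [hext]
        split_ifs with hx
        · exact decide_eq_decide.mpr (by simp [Fin.le_def])
        · have h1 : ¬ (q' - 1 ≤ t.1) := by omega
          have h2 : ¬ (x.1 ≤ t.1) := by omega
          simp [Fin.le_def, h1, h2]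
  refine ⟨fun x => u (emb x), fun f => θ (ext f), fun x j => hu (emb x) j,
    fun f hf j => hθ (ext f) (hmem f hf) j, ?_⟩
  intro f hf x
  have h1 : f x = (ext f) (emb x) := by
    simp only [hext, hemb]
    rw [dif_pos x.2]
  rw [h1]
  exact himp (ext f) (hmem f hf) (emb x)

-- ================= tiny constructions =================

lemma impl_n1_q2 : Implementable Bstar Bstar 1 2 (Gset 2 ∪ Lset 2) := by
  refine ⟨fun x _ => if x.1 = 0 then BB.zero else BB.one,
    fun f _ => if f 0 then (if f 1 then BB.star else BB.zero) else BB.one, ?_, ?_, ?_⟩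
  · intro x j; dsimp only; split_ifs <;> exact mem_Bstar (by simp)
  · intro f _ j; dsimp only; split_ifs <;> exact mem_Bstar (by simp)
  · rintro f (⟨t, rfl⟩ | ⟨t, rfl⟩) x <;> fin_cases t <;> fin_cases x <;> decide

lemma impl_n2_q3 : Implementable Bstar Bstar 2 3 (Gset 3 ∪ Lset 3) := by
  refine ⟨fun x j => if x.1 = 0 then BB.zero else if x.1 = 1 then
      (if j.1 = 0 then BB.one else BB.zero) else BB.one,
    fun f => if f 0 then (if f 1 then (if f 2 then (fun _ => BB.star) else ![BB.star, BB.zero])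
      else ![BB.zero, BB.star]) else (if f 1 then ![BB.one, BB.star] else ![BB.star, BB.one]),
    ?_, ?_, ?_⟩
  · intro x j; dsimp only; split_ifs <;> exact mem_Bstar (by simp)
  · intro f _ j
    dsimp only
    split_ifs <;> fin_cases j <;> exact mem_Bstar (by simp)
  · rintro f (⟨t, rfl⟩ | ⟨t, rfl⟩) x <;> fin_cases t <;> fin_cases x <;> decide

-- ================= main construction =================

def consU (n x jv : ℕ) : BB :=
  if jv = 0 then (if x = 0 then BB.zero else
    if x = 2*n-4 ∨ x = 2*n-3 then BB.one else BB.star)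
  else if jv = 1 then (if x = 1 ∨ x = 2 then BB.zero else
    if x = 2*n-2 then BB.one else BB.star)
  else (if x = 2*jv-4 ∨ x = 2*jv-3 then BB.zero else
    if x = 2*jv-1 ∨ x = 2*jv then BB.one else BB.star)

def consG (n t jv : ℕ) : BB :=
  if t = 0 then BB.star
  else if t % 2 = 0 then
    (if t = 2*n-2 then (if jv = 0 then BB.zero else if 2 ≤ jv then BB.one else BB.star)
     else (if 2 ≤ jv ∧ jv ≤ t/2 + 1 then BB.one else BB.star))
  else
    (if jv = 0 then BB.one
     else if jv = 1 then (if 1 ≤ t/2 then BB.one else BB.star)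
     else if jv ≤ t/2 then BB.zero else BB.star)

def consL (n s jv : ℕ) : BB :=
  if s + 1 = 2*n-1 then BB.star
  else if (s+1) % 2 = 0 then
    (if jv = 0 then (if (s+1)/2 ≤ n-2 then BB.zero else BB.star)
     else if jv = 1 then BB.zero
     else if (s+1)/2 + 2 ≤ jv then BB.one else BB.star)
  else
    (if (s+1)/2 = 0 then (if jv = 0 then BB.star else if jv = 1 then BB.one else BB.zero)
     else (if (s+1)/2 + 1 ≤ jv then BB.zero else BB.star))

set_option maxHeartbeats 3200000 in
lemma consG_match (n t x : ℕ) (hn : 3 ≤ n) (ht : t < 2*n-1) (hx : x < 2*n-1) :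
    t ≤ x ↔ ∀ j : Fin n, Tcell (consU n x j.1) (consG n t j.1) = true := by
  constructor
  · intro htx ⟨jv, hj⟩
    show Tcell (consU n x jv) (consG n t jv) = true
    unfold consU consG
    split_ifs <;> first | rfl | (exfalso; first | exact ‹False› | omega)
  · intro hall
    by_contra hcon
    have hxt : x < t := by omega
    have key : ∃ jv : ℕ, jv < n ∧
        Tcell (consU n x jv) (consG n t jv) = false := by
      rcases Nat.even_or_odd t with he | ho
      · have ht2 : t % 2 = 0 := Nat.even_iff.mp he
        by_cases hlast : t = 2*n-2
        · by_cases hxe : x = 2*n-4 ∨ x = 2*n-3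
          · refine ⟨0, by omega, ?_⟩
            unfold consU consG
            split_ifs <;> first | rfl | (exfalso; first | exact ‹False› | omega)
          · refine ⟨x/2 + 2, by omega, ?_⟩
            unfold consU consG
            split_ifs <;> first | rfl | (exfalso; first | exact ‹False› | omega)
        · refine ⟨x/2 + 2, by omega, ?_⟩
          unfold consU consG
          split_ifs <;> first | rfl | (exfalso; first | exact ‹False› | omega)
      · have ht2 : t % 2 = 1 := Nat.odd_iff.mp ho
        by_cases hx0 : x = 0
        · refine ⟨0, by omega, ?_⟩
          unfold consU consG
          split_ifs <;> first | rfl | (exfalso; first | exact ‹False› | omega)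
        · by_cases hx12 : x = 1 ∨ x = 2
          · refine ⟨1, by omega, ?_⟩
            unfold consU consG
            split_ifs <;> first | rfl | (exfalso; first | exact ‹False› | omega)
          · refine ⟨(x-1)/2 + 1, by omega, ?_⟩
            unfold consU consG
            split_ifs <;> first | rfl | (exfalso; first | exact ‹False› | omega)
    obtain ⟨jv, hj, hf⟩ := key
    have := hall ⟨jv, hj⟩
    rw [show ((⟨jv, hj⟩ : Fin n) : ℕ) = jv from rfl] at this
    rw [this] at hf
    simp at hf

set_option maxHeartbeats 3200000 in
lemma consL_match (n s x : ℕ) (hn : 3 ≤ n) (hs : s < 2*n-1) (hx : x < 2*n-1) :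
    x ≤ s ↔ ∀ j : Fin n, Tcell (consU n x j.1) (consL n s j.1) = true := by
  constructor
  · intro hxs ⟨jv, hj⟩
    show Tcell (consU n x jv) (consL n s jv) = true
    unfold consU consL
    split_ifs <;> first | rfl | (exfalso; first | exact ‹False› | omega)
  · intro hall
    by_contra hcon
    have hsx : s < x := by omega
    have key : ∃ jv : ℕ, jv < n ∧
        Tcell (consU n x jv) (consL n s jv) = false := by
      rcases Nat.even_or_odd (s+1) with he | ho
      · have hr2 : (s+1) % 2 = 0 := Nat.even_iff.mp he
        by_cases hxl : x = 2*n-2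
        · refine ⟨1, by omega, ?_⟩
          unfold consU consL
          split_ifs <;> first | rfl | (exfalso; first | exact ‹False› | omega)
        · by_cases hxe : x = 2*n-4 ∨ x = 2*n-3
          · refine ⟨0, by omega, ?_⟩
            unfold consU consL
            split_ifs <;> first | rfl | (exfalso; first | exact ‹False› | omega)
          · refine ⟨x/2 + 2, by omega, ?_⟩
            unfold consU consL
            split_ifs <;> first | rfl | (exfalso; first | exact ‹False› | omega)
      · have hr2 : (s+1) % 2 = 1 := Nat.odd_iff.mp ho
        by_cases hx12 : x = 1 ∨ x = 2
        · refine ⟨1, by omega, ?_⟩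
          unfold consU consL
          split_ifs <;> first | rfl | (exfalso; first | exact ‹False› | omega)
        · refine ⟨(x-1)/2 + 1, by omega, ?_⟩
          unfold consU consL
          split_ifs <;> first | rfl | (exfalso; first | exact ‹False› | omega)
    obtain ⟨jv, hj, hf⟩ := key
    have := hall ⟨jv, hj⟩
    rw [show ((⟨jv, hj⟩ : Fin n) : ℕ) = jv from rfl] at this
    rw [this] at hf
    simp at hf

-- ================= lower bound =================

def bbit (b : Bool) : BB := if b then BB.one else BB.zero

lemma bbit_inj : Function.Injective bbit := by
  intro a b h
  cases a <;> cases b <;> simp_all [bbit]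

lemma theta_bit {θj : BB} (hθ : θj ∈ Bstar) {u' : BB} (hT : ¬ Tcell u' θj = true) :
    ∃ b : Bool, θj = bbit b := by
  rcases hθ with h | h | h
  · exact ⟨false, h⟩
  · exact ⟨true, h⟩
  · exact absurd (h ▸ Tcell_star_right u') hT

lemma failing_coord {n : ℕ} {u θ : Fin n → BB} (h : Tword u θ = false) :
    ∃ j, ¬ Tcell (u j) (θ j) = true := by
  simpa [Tword] using h

lemma slot_max {n q : ℕ} {u : Fin q → Fin n → BB} {θf : Fin n → BB}
    (hθ : ∀ j, θf j ∈ Bstar) {t : Fin q}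
    (himpf : ∀ x : Fin q, decide (t ≤ x) = Tword (u x) θf) {x : Fin q} (hx : x < t) :
    ∃ s : Fin n × Bool, bbit s.2 = θf s.1 ∧ ¬ (Tcell (u x s.1) (bbit s.2) = true) ∧
      ∀ y, t ≤ y → Tcell (u y s.1) (bbit s.2) = true := by
  have h1 : Tword (u x) θf = false := by
    have h2 := himpf x
    rw [decide_eq_false (not_le_of_gt hx)] at h2
    exact h2.symm
  obtain ⟨j, hj⟩ := failing_coord h1
  obtain ⟨b, hb⟩ := theta_bit (hθ j) hj
  refine ⟨(j, b), hb.symm, fun hc => hj (by rw [hb]; exact hc), ?_⟩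
  intro y hy
  have h3 := himpf y
  rw [decide_eq_true_eq.mpr hy] at h3
  have h4 := (Tword_true_iff (u y) θf).mp h3.symm j
  exact hb ▸ h4

lemma slot_min {n q : ℕ} {u : Fin q → Fin n → BB} {θf : Fin n → BB}
    (hθ : ∀ j, θf j ∈ Bstar) {t : Fin q}
    (himpf : ∀ x : Fin q, decide (x ≤ t) = Tword (u x) θf) {x : Fin q} (hx : t < x) :
    ∃ s : Fin n × Bool, bbit s.2 = θf s.1 ∧ ¬ (Tcell (u x s.1) (bbit s.2) = true) ∧
      ∀ y, y ≤ t → Tcell (u y s.1) (bbit s.2) = true := by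
  have h1 : Tword (u x) θf = false := by
    have h2 := himpf x
    rw [decide_eq_false (not_le_of_gt hx)] at h2
    exact h2.symm
  obtain ⟨j, hj⟩ := failing_coord h1
  obtain ⟨b, hb⟩ := theta_bit (hθ j) hj
  refine ⟨(j, b), hb.symm, fun hc => hj (by rw [hb]; exact hc), ?_⟩
  intro y hy
  have h3 := himpf y
  rw [decide_eq_true_eq.mpr hy] at h3
  have h4 := (Tword_true_iff (u y) θf).mp h3.symm j
  exact hb ▸ h4

lemma lb_odd (n q : ℕ) (hn : 1 ≤ n) (hqdef : q = 2*n+1) :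
    ¬ Implementable Bdot Bstar n q (Gset q ∪ Lset q) := by
  intro H
  obtain ⟨u, θ, hu, hθ, himp⟩ := H
  have hG : ∀ t : Fin q, ∀ x : Fin q,
      decide (t ≤ x) = Tword (u x) (θ (fun y => decide (t ≤ y))) :=
    fun t => himp _ (Or.inl ⟨t, rfl⟩)
  have hGθ : ∀ t : Fin q, ∀ j, θ (fun y => decide (t ≤ y)) j ∈ Bstar :=
    fun t => hθ _ (Or.inl ⟨t, rfl⟩)
  have hL : ∀ t : Fin q, ∀ x : Fin q,
      decide (x ≤ t) = Tword (u x) (θ (fun y => decide (y ≤ t))) :=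
    fun t => himp _ (Or.inr ⟨t, rfl⟩)
  have hLθ : ∀ t : Fin q, ∀ j, θ (fun y => decide (y ≤ t)) j ∈ Bstar :=
    fun t => hθ _ (Or.inr ⟨t, rfl⟩)
  have hM0 : ∀ x : Fin (q-1), ∃ s : Fin n × Bool,
      ¬ (Tcell (u ⟨x.1, by have := x.2; omega⟩ s.1) (bbit s.2) = true) ∧
      ∀ y : Fin q, x.1 < y.1 → Tcell (u y s.1) (bbit s.2) = true := by
    intro x
    have hxlt := x.2
    have hx : (⟨x.1, by omega⟩ : Fin q) < (⟨x.1+1, by omega⟩ : Fin q) := by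
      simp [Fin.lt_def]
    obtain ⟨s, _, h2, h3⟩ := slot_max (hGθ ⟨x.1+1, by omega⟩) (hG ⟨x.1+1, by omega⟩) hx
    exact ⟨s, h2, fun y hy => h3 y (by simp [Fin.le_def]; omega)⟩
  choose M hM1 hM2 using hM0
  have hN0 : ∀ x : Fin (q-1), ∃ s : Fin n × Bool,
      ¬ (Tcell (u ⟨x.1+1, by have := x.2; omega⟩ s.1) (bbit s.2) = true) ∧
      ∀ y : Fin q, y.1 < x.1+1 → Tcell (u y s.1) (bbit s.2) = true := by
    intro x
    have hxlt := x.2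
    have hx : (⟨x.1, by omega⟩ : Fin q) < (⟨x.1+1, by omega⟩ : Fin q) := by
      simp [Fin.lt_def]
    obtain ⟨s, _, h2, h3⟩ := slot_min (hLθ ⟨x.1, by omega⟩) (hL ⟨x.1, by omega⟩) hx
    exact ⟨s, h2, fun y hy => h3 y (by simp [Fin.le_def]; omega)⟩
  choose N hN1 hN2 using hN0
  have Minj : Function.Injective M := by
    intro a b hab
    by_contra hne
    have hne' : a.1 ≠ b.1 := fun hc => hne (Fin.ext hc)
    rcases Nat.lt_or_ge a.1 b.1 with hlt | hge
    · have h1 := hM2 a ⟨b.1, by have := b.2; omega⟩ hlt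
      rw [hab] at h1
      exact hM1 b h1
    · have hlt : b.1 < a.1 := by omega
      have h1 := hM2 b ⟨a.1, by have := a.2; omega⟩ hlt
      rw [← hab] at h1
      exact hM1 a h1
  have hcards : Fintype.card (Fin (q-1)) = Fintype.card (Fin n × Bool) := by
    simp [Fintype.card_prod]
    omega
  have Msurj : Function.Surjective M :=
    ((Fintype.bijective_iff_injective_and_card M).mpr ⟨Minj, hcards⟩).2
  have hq2 : q-2 < q-1 := by omega
  obtain ⟨x0, hx0⟩ := Msurj (N ⟨q-2, hq2⟩)
  apply hM1 x0
  rw [hx0]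
  exact hN2 ⟨q-2, hq2⟩ ⟨x0.1, by have := x0.2; omega⟩ (by simp; have := x0.2; omega)

lemma lb_even (n q : ℕ) (hn : 2 ≤ n) (hqdef : q = 2*n) :
    ¬ Implementable Bdot Bstar n q (Gset q ∪ Lset q) := by
  intro H
  obtain ⟨u, θ, hu, hθ, himp⟩ := H
  have hG : ∀ t : Fin q, ∀ x : Fin q,
      decide (t ≤ x) = Tword (u x) (θ (fun y => decide (t ≤ y))) :=
    fun t => himp _ (Or.inl ⟨t, rfl⟩)
  have hGθ : ∀ t : Fin q, ∀ j, θ (fun y => decide (t ≤ y)) j ∈ Bstar :=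
    fun t => hθ _ (Or.inl ⟨t, rfl⟩)
  have hL : ∀ t : Fin q, ∀ x : Fin q,
      decide (x ≤ t) = Tword (u x) (θ (fun y => decide (y ≤ t))) :=
    fun t => himp _ (Or.inr ⟨t, rfl⟩)
  have hLθ : ∀ t : Fin q, ∀ j, θ (fun y => decide (y ≤ t)) j ∈ Bstar :=
    fun t => hθ _ (Or.inr ⟨t, rfl⟩)
  have hM0 : ∀ x : Fin (q-1), ∃ s : Fin n × Bool,
      ¬ (Tcell (u ⟨x.1, by have := x.2; omega⟩ s.1) (bbit s.2) = true) ∧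
      ∀ y : Fin q, x.1 < y.1 → Tcell (u y s.1) (bbit s.2) = true := by
    intro x
    have hxlt := x.2
    have hx : (⟨x.1, by omega⟩ : Fin q) < (⟨x.1+1, by omega⟩ : Fin q) := by
      simp [Fin.lt_def]
    obtain ⟨s, _, h2, h3⟩ := slot_max (hGθ ⟨x.1+1, by omega⟩) (hG ⟨x.1+1, by omega⟩) hx
    exact ⟨s, h2, fun y hy => h3 y (by simp [Fin.le_def]; omega)⟩
  choose M hM1 hM2 using hM0
  have hN0 : ∀ x : Fin (q-1), ∃ s : Fin n × Bool,
      ¬ (Tcell (u ⟨x.1+1, by have := x.2; omega⟩ s.1) (bbit s.2) = true) ∧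
      ∀ y : Fin q, y.1 < x.1+1 → Tcell (u y s.1) (bbit s.2) = true := by
    intro x
    have hxlt := x.2
    have hx : (⟨x.1, by omega⟩ : Fin q) < (⟨x.1+1, by omega⟩ : Fin q) := by
      simp [Fin.lt_def]
    obtain ⟨s, _, h2, h3⟩ := slot_min (hLθ ⟨x.1, by omega⟩) (hL ⟨x.1, by omega⟩) hx
    exact ⟨s, h2, fun y hy => h3 y (by simp [Fin.le_def]; omega)⟩
  choose N hN1 hN2 using hN0
  have Minj : Function.Injective M := by
    intro a b hab
    by_contra hne
    have hne' : a.1 ≠ b.1 := fun hc => hne (Fin.ext hc)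
    rcases Nat.lt_or_ge a.1 b.1 with hlt | hge
    · have h1 := hM2 a ⟨b.1, by have := b.2; omega⟩ hlt
      rw [hab] at h1
      exact hM1 b h1
    · have hlt : b.1 < a.1 := by omega
      have h1 := hM2 b ⟨a.1, by have := a.2; omega⟩ hlt
      rw [← hab] at h1
      exact hM1 a h1
  have hq1 : 0 < q-1 := by omega
  have hq2 : q-2 < q-1 := by omega
  -- M x is never the special min-slot at q-1
  have hs1M : ∀ x : Fin (q-1), M x ≠ N ⟨q-2, hq2⟩ := by
    intro x hx
    apply hM1 x
    rw [hx]
    exact hN2 ⟨q-2, hq2⟩ ⟨x.1, by have := x.2; omega⟩ (by simp; have := x.2; omega)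
  have hs0N : ∀ z : Fin (q-1), N z ≠ M ⟨0, hq1⟩ := by
    intro z hz
    apply hN1 z
    rw [hz]
    exact hM2 ⟨0, hq1⟩ ⟨z.1+1, by have := z.2; omega⟩ (by simp)
  have covM : ∀ s : Fin n × Bool, s = N ⟨q-2, hq2⟩ ∨ ∃ x, M x = s := by
    have hnotmem : N ⟨q-2, hq2⟩ ∉ Finset.image M Finset.univ := by
      simp only [Finset.mem_image, Finset.mem_univ, true_and, not_exists]
      intro x hc
      exact hs1M x hc
    have hins : (insert (N ⟨q-2, hq2⟩) (Finset.image M Finset.univ)) = Finset.univ := by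
      apply Finset.eq_univ_of_card
      rw [Finset.card_insert_of_notMem hnotmem,
        Finset.card_image_of_injective _ Minj]
      simp [Fintype.card_prod]
      omega
    intro s
    have hmem : s ∈ insert (N ⟨q-2, hq2⟩) (Finset.image M Finset.univ) :=
      hins ▸ Finset.mem_univ s
    rcases Finset.mem_insert.mp hmem with h | h
    · exact Or.inl h
    · right
      obtain ⟨x, _, hx⟩ := Finset.mem_image.mp h
      exact ⟨x, hx⟩
  have covN : ∀ s : Fin n × Bool, s = M ⟨0, hq1⟩ ∨ ∃ z, N z = s := by
    have Ninj : Function.Injective N := by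
      intro a b hab
      by_contra hne
      have hne' : a.1 ≠ b.1 := fun hc => hne (Fin.ext hc)
      rcases Nat.lt_or_ge a.1 b.1 with hlt | hge
      · have h1 := hN2 b ⟨a.1+1, by have := a.2; omega⟩ (by simp; omega)
        rw [← hab] at h1
        exact hN1 a h1
      · have hlt : b.1 < a.1 := by omega
        have h1 := hN2 a ⟨b.1+1, by have := b.2; omega⟩ (by simp; omega)
        rw [hab] at h1
        exact hN1 b h1
    have hnotmem : M ⟨0, hq1⟩ ∉ Finset.image N Finset.univ := by
      simp only [Finset.mem_image, Finset.mem_univ, true_and, not_exists]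
      intro z hc
      exact hs0N z hc
    have hins : (insert (M ⟨0, hq1⟩) (Finset.image N Finset.univ)) = Finset.univ := by
      apply Finset.eq_univ_of_card
      rw [Finset.card_insert_of_notMem hnotmem,
        Finset.card_image_of_injective _ Ninj]
      simp [Fintype.card_prod]
      omega
    intro s
    have hmem : s ∈ insert (M ⟨0, hq1⟩) (Finset.image N Finset.univ) :=
      hins ▸ Finset.mem_univ s
    rcases Finset.mem_insert.mp hmem with h | h
    · exact Or.inl h
    · right
      obtain ⟨z, _, hz⟩ := Finset.mem_image.mp h
      exact ⟨z, hz⟩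
  -- singleton lemma
  have sing : ∀ k : ℕ, ∀ hk : k < q-1, ∀ y : Fin q, y.1 ≠ k →
      Tcell (u y (M ⟨k, hk⟩).1) (bbit (M ⟨k, hk⟩).2) = true := by
    intro k
    induction k using Nat.strong_induction_on with
    | _ k IH =>
      intro hk y hy
      rcases Nat.lt_or_ge k y.1 with hgt | hle
      · exact hM2 ⟨k, hk⟩ y hgt
      · have hylt : y.1 < k := by omega
        have hk1 : 1 ≤ k := by omega
        have hMk : M ⟨k, hk⟩ ≠ M ⟨0, hq1⟩ := by
          intro hc
          have := Minj hc
          simp [Fin.ext_iff] at this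
          omega
        rcases covN (M ⟨k, hk⟩) with h | ⟨z, hz⟩
        · exact absurd h hMk
        have hzk : z.1 + 1 = k := by
          by_contra hne
          rcases Nat.lt_or_ge k (z.1+1) with h1 | h2
          · apply hN1 z
            rw [hz]
            exact hM2 ⟨k, hk⟩ ⟨z.1+1, by have := z.2; omega⟩ (by simp; omega)
          · have hw : z.1+1 < k := by omega
            have hwk : z.1+1 < q-1 := by omega
            have hMw : M ⟨z.1+1, hwk⟩ ≠ M ⟨0, hq1⟩ := by
              intro hc
              have := Minj hc
              simp [Fin.ext_iff] at this
            rcases covN (M ⟨z.1+1, hwk⟩) with h | ⟨z', hz'⟩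
            · exact absurd h hMw
            have hz'w : z'.1 + 1 = z.1 + 1 := by
              by_contra hne'
              rcases Nat.lt_or_ge (z'.1+1) (z.1+1) with hlt1 | hge1
              · apply hN1 z'
                rw [hz']
                exact IH (z.1+1) hw hwk ⟨z'.1+1, by have := z'.2; omega⟩
                  (by simp; omega)
              · apply hM1 ⟨z.1+1, hwk⟩
                have h5 := hN2 z' ⟨z.1+1, by omega⟩ (by simp; omega)
                rw [hz'] at h5
                exact h5
            have hz'z : z' = z := Fin.ext (by omega)
            rw [hz'z, hz] at hz'
            have := Minj hz'
            simp [Fin.ext_iff] at this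
            omega
        have h6 := hN2 z y (by omega)
        rw [hz] at h6
        exact h6
  -- final counting with the pattern of G at q-1
  have hqlast : q-1 < q := by omega
  have key : ∀ x : Fin (q-1),
      bbit (M x).2 = θ (fun y => decide ((⟨q-1, hqlast⟩ : Fin q) ≤ y)) (M x).1 := by
    intro x
    have hxlt := x.2
    have hx : (⟨x.1, by omega⟩ : Fin q) < (⟨q-1, hqlast⟩ : Fin q) := by
      simp only [Fin.mk_lt_mk]
      omega
    obtain ⟨s, hsb, hs2', _⟩ := slot_max (hGθ ⟨q-1, hqlast⟩) (hG ⟨q-1, hqlast⟩) hx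
    have hss1 : s ≠ N ⟨q-2, hq2⟩ := by
      intro hc
      apply hs2'
      rw [hc]
      exact hN2 ⟨q-2, hq2⟩ ⟨x.1, by omega⟩ (by simp; omega)
    rcases covM s with h | ⟨x', hx'⟩
    · exact absurd h hss1
    have hvals : x'.1 = x.1 := by
      by_contra hne
      apply hs2'
      rw [← hx']
      exact sing x'.1 (by have := x'.2; omega) ⟨x.1, by omega⟩ (by simp; omega)
    have hxx : x' = x := Fin.ext hvals
    rw [hxx] at hx'
    rw [hx']
    exact hsb
  have Jinj : Function.Injective (fun x : Fin (q-1) => (M x).1) := by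
    intro a b hab
    simp only at hab
    have h1 := key a
    have h2 := key b
    rw [hab] at h1
    have h3 : bbit (M a).2 = bbit (M b).2 := h1.trans h2.symm
    exact Minj (Prod.ext hab (bbit_inj h3))
  have hcard := Fintype.card_le_of_injective _ Jinj
  simp at hcard
  omega

lemma countG (q : ℕ) (t : Fin q) :
    (Finset.univ.filter (fun x : Fin q => (decide (t ≤ x)) = false)).card = t.1 := by
  have h : (Finset.univ.filter (fun x : Fin q => (decide (t ≤ x)) = false)) = Finset.Iio t := by
    ext x
    simp [Finset.mem_Iio, decide_eq_false_iff_not, not_le]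
  rw [h, Fin.card_Iio]

lemma countL (q : ℕ) (t : Fin q) :
    (Finset.univ.filter (fun x : Fin q => (decide (x ≤ t)) = false)).card = q - 1 - t.1 := by
  have h : (Finset.univ.filter (fun x : Fin q => (decide (x ≤ t)) = false)) = Finset.Ioi t := by
    ext x
    simp [Finset.mem_Ioi, decide_eq_false_iff_not, not_le]
  rw [h, Fin.card_Ioi]

def consTheta (n : ℕ) (f : Fin (2*n-1) → Bool) : Fin n → BB :=
  if h : 0 < 2*n-1 then
    (if f ⟨0, h⟩ = false then
      fun j => consG n ((Finset.univ.filter (fun x => f x = false)).card) j.1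
     else
      fun j => consL n ((2*n-1-1) - (Finset.univ.filter (fun x => f x = false)).card) j.1)
  else fun _ => BB.star

lemma impl_big (n : ℕ) (hn : 3 ≤ n) :
    Implementable Bstar Bstar n (2*n-1) (Gset (2*n-1) ∪ Lset (2*n-1)) := by
  have hq : 0 < 2*n-1 := by omega
  refine ⟨fun x j => consU n x.1 j.1, consTheta n, ?_, ?_, ?_⟩
  · intro x j
    apply mem_Bstar
    unfold consU
    dsimp only
    split_ifs <;> simp
  · intro f _ j
    apply mem_Bstar
    unfold consTheta
    rw [dif_pos hq]
    split_ifs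
    · unfold consG; dsimp only; split_ifs <;> simp
    · unfold consL; dsimp only; split_ifs <;> simp
  · rintro f (⟨t, rfl⟩ | ⟨t, rfl⟩) x
    · -- Gset case
      have hcount : (Finset.univ.filter
          (fun y : Fin (2*n-1) => (decide (t ≤ y)) = false)).card = t.1 := countG _ t
      unfold consTheta
      rw [dif_pos hq]
      by_cases ht0 : t.1 = 0
      · have hf0 : (decide (t ≤ (⟨0, hq⟩ : Fin (2*n-1)))) = true := by
          simp [Fin.le_def]
          omega
        rw [if_neg (show ¬((fun y : Fin (2*n-1) => decide (t ≤ y)) ⟨0, hq⟩ = false) by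
          rw [show (fun y : Fin (2*n-1) => decide (t ≤ y)) ⟨0, hq⟩ = true from hf0]; simp)]
        rw [hcount]
        refine decide_eq_Tword ⟨fun _ j => ?_, fun _ => by rw [Fin.le_def]; omega⟩
        have hLstar : consL n (2*n-1-1 - t.1) j.1 = BB.star := by
          unfold consL
          rw [if_pos (by omega)]
        rw [hLstar]
        exact Tcell_star_right _
      · have hf0 : (decide (t ≤ (⟨0, hq⟩ : Fin (2*n-1)))) = false := by
          simp [Fin.le_def]
          omega
        rw [if_pos (show (fun y : Fin (2*n-1) => decide (t ≤ y)) ⟨0, hq⟩ = false from hf0)]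
        rw [hcount]
        refine decide_eq_Tword ?_
        rw [Fin.le_def]
        exact consG_match n t.1 x.1 hn t.2 x.2
    · -- Lset case
      have hcount : (Finset.univ.filter
          (fun y : Fin (2*n-1) => (decide (y ≤ t)) = false)).card = 2*n-1 - 1 - t.1 :=
        countL _ t
      unfold consTheta
      rw [dif_pos hq]
      have hf0 : (decide ((⟨0, hq⟩ : Fin (2*n-1)) ≤ t)) = true := by
        simp [Fin.le_def]
      rw [if_neg (show ¬((fun y : Fin (2*n-1) => decide (y ≤ t)) ⟨0, hq⟩ = false) by
        rw [show (fun y : Fin (2*n-1) => decide (y ≤ t)) ⟨0, hq⟩ = true from hf0]; simp)]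
      rw [hcount]
      have harith : 2*n-1-1 - (2*n-1-1 - t.1) = t.1 := by
        have := t.2
        omega
      rw [harith]
      refine decide_eq_Tword ?_
      rw [Fin.le_def]
      exact consL_match n t.1 x.1 hn t.2 x.2

lemma constr (n q : ℕ) (hn : 1 ≤ n) (hq : 2 ≤ q)
    (hbound : if n = 1 then q ≤ 2 else q ≤ 2*n-1) :
    Implementable Bstar Bstar n q (Gset q ∪ Lset q) := by
  by_cases h1 : n = 1
  · subst h1
    rw [if_pos rfl] at hbound
    obtain rfl : q = 2 := by omega
    exact impl_n1_q2
  · rw [if_neg h1] at hbound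
    by_cases h2 : n = 2
    · subst h2
      exact impl_restrict hq (by omega) impl_n2_q3
    · have h3 : 3 ≤ n := by omega
      exact impl_restrict hq hbound (impl_big n h3)



theorem GLset_implementable_starStar_rejectStar (q n : ℕ)
    (hq : 2 ≤ q) (hn : 1 ≤ n) :
    (Implementable Bstar Bstar n q (Gset q ∪ Lset q) ↔
      (if n = 1 then q ≤ 2 else q ≤ 2 * n - 1)) ∧
    (Implementable Bdot Bstar n q (Gset q ∪ Lset q) ↔
      (if n = 1 then q ≤ 2 else q ≤ 2 * n - 1)) := by

  have hlb : Implementable Bdot Bstar n q (Gset q ∪ Lset q) →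
      (if n = 1 then q ≤ 2 else q ≤ 2 * n - 1) := by
    intro H
    by_cases h1 : n = 1
    · rw [if_pos h1]
      subst h1
      by_contra hc
      exact lb_odd 1 3 le_rfl (by norm_num) (impl_restrict (by omega) (by omega) H)
    · rw [if_neg h1]
      by_contra hc
      have h2 : 2 ≤ n := by omega
      exact lb_even n (2*n) h2 rfl (impl_restrict (by omega) (by omega) H)
  have hcon : (if n = 1 then q ≤ 2 else q ≤ 2 * n - 1) →
      Implementable Bstar Bstar n q (Gset q ∪ Lset q) := fun h => constr n q hn hq h
  exact ⟨⟨fun h => hlb (impl_star_to_dot h), hcon⟩,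
    ⟨hlb, fun h => impl_star_to_dot (hcon h)⟩⟩
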